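/- Let F : ℝ² → ℝ satisfy |F(a,b) − f(a)| + |F(a,b) − f(b)| ≤ C_F |b−a| for all a, b in a bounded set K, where f : ℝ → ℝ. Define the Crandall–Majda numerical entropy flux Q(a,b;k) = F(a∨k, b∨k) − F(a∧k, b∧k) and the Kruzkov entropy flux q(a,k) = sign(a−k)(f(a)−f(k)). Then |Q(a,b;k) − q(a,k)| ≤ 2 C_F |b−a| for all a, b ∈ K and k ∈ K. -/
import Mathlib

open Set

/-- consistency of the Crandall–Majda numerical entropy flux with
the Kruzkov entropy flux. -/
theorem stmt_7
    (f : ℝ → ℝ) (F : ℝ → ℝ → ℝ) (C_F m M : ℝ)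
    (hF : ∀ a ∈ Icc m M, ∀ b ∈ Icc m M,
      |F a b - f a| + |F a b - f b| ≤ C_F * |b - a|) :
    ∀ a ∈ Icc m M, ∀ b ∈ Icc m M, ∀ k ∈ Icc m M,
      |(F (max a k) (max b k) - F (min a k) (min b k)) -
        Real.sign (a - k) * (f a - f k)| ≤ 2 * C_F * |b - a| := by
  intro a ha b hb k hk
  have hmaxa : max a k ∈ Icc m M := ⟨le_max_of_le_left ha.1, max_le ha.2 hk.2⟩
  have hmaxb : max b k ∈ Icc m M := ⟨le_max_of_le_left hb.1, max_le hb.2 hk.2⟩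
  have hmina : min a k ∈ Icc m M := ⟨le_min ha.1 hk.1, min_le_of_left_le ha.2⟩
  have hminb : min b k ∈ Icc m M := ⟨le_min hb.1 hk.1, min_le_of_left_le hb.2⟩
  have hcons : ∀ c ∈ Icc m M, F c c = f c := by
    intro c hc
    have h := hF c hc c hc
    rw [sub_self, abs_zero, mul_zero] at h
    have h0 : |F c c - f c| = 0 :=
      le_antisymm (by linarith [abs_nonneg (F c c - f c)]) (abs_nonneg _)
    have := abs_eq_zero.mp h0
    linarith
  -- key algebraic identity
  have hq : f (max a k) - f (min a k) = Real.sign (a - k) * (f a - f k) := by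
    rcases lt_trichotomy a k with h | h | h
    · rw [max_eq_right h.le, min_eq_left h.le, Real.sign_of_neg (by linarith)]
      ring
    · subst h; simp
    · rw [max_eq_left h.le, min_eq_right h.le, Real.sign_of_pos (by linarith)]
      ring
  have h1 := hF (max a k) hmaxa (max b k) hmaxb
  have h2 := hF (min a k) hmina (min b k) hminb
  have e1 : |F (max a k) (max b k) - f (max a k)| ≤ C_F * |max b k - max a k| :=
    le_trans (le_add_of_nonneg_right (abs_nonneg _)) h1
  have e2 : |F (min a k) (min b k) - f (min a k)| ≤ C_F * |min b k - min a k| :=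
    le_trans (le_add_of_nonneg_right (abs_nonneg _)) h2
  have d1 : |max b k - max a k| ≤ |b - a| := abs_max_sub_max_le_abs b a k
  have d2 : |min b k - min a k| ≤ |b - a| := by
    have := abs_min_sub_min_le_max b k a k
    simpa using this
  by_cases hab : b = a
  · subst hab
    rw [hcons _ hmaxa, hcons _ hmina]
    simp [hq, sub_self]
  · have hC : 0 ≤ C_F := by
      have hpos : 0 < |b - a| := abs_pos.mpr (sub_ne_zero.mpr hab)
      have h := hF a ha b hb
      nlinarith [abs_nonneg (F a b - f a), abs_nonneg (F a b - f b)]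
    calc |(F (max a k) (max b k) - F (min a k) (min b k)) -
            Real.sign (a - k) * (f a - f k)|
        = |(F (max a k) (max b k) - f (max a k)) -
            (F (min a k) (min b k) - f (min a k))| := by rw [← hq]; ring_nf
      _ ≤ |F (max a k) (max b k) - f (max a k)| +
            |F (min a k) (min b k) - f (min a k)| := abs_sub _ _
      _ ≤ C_F * |b - a| + C_F * |b - a| := by
          have := mul_le_mul_of_nonneg_left d1 hC
          have := mul_le_mul_of_nonneg_left d2 hC
          linarith
      _ = 2 * C_F * |b - a| := by ring
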